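/- arXiv:2007.13908 — 2 statements merged into one kernel-verified Lean document; each statement's English description precedes it below -/
import Mathlib

section
/- Let h(x,y) = |x − y| on ℝ×ℝ and let I_L = (0,L) for L > 0. Then ⨍_{I_L}⨍_{I_L} |h(x,y) − (h_x)_{I_L} − (h_y)_{I_L} + h_{I_L×I_L}| dx dy = πL/18. Consequently, since this tends to ∞ as L → ∞, h ∉ BMO_{rec,ℛ}(ℝ×ℝ), where ℛ is the basis of open axis-parallel rectangles (products of finite open intervals) in ℝ². -/
/-!
On `I = (0, L)` the slice averages of `|x - y|` are `x²/L - x + L/2` and its total average is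
`L/3`, so the doubly centred function `q` equals `(L²/3 - (L - x)² - y²)/L` below the diagonal and
its mirror image `(L²/3 - x² - (L - y)²)/L` above it. Every slice of `q` has integral zero, hence
`∫|q| = 2 ∫ q⁺`, and `q⁺` lives on two quarter discs of radius `L/√3` at the corners `(L, 0)` and
`(0, L)`. Integrating `(L²/3 - ρ²)/L` over them gives `∫∫ |q| = π L³/18`, i.e. an oscillation
`π L/18`, which is unbounded in `L`.
-/

open MeasureTheory Set ENNReal

noncomputable section

/-- The rectangular mean oscillation of `f : ℝ × ℝ → ℝ` over `S₁ × S₂`. -/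
def recOsc (f : ℝ × ℝ → ℝ) (S₁ S₂ : Set ℝ) : ℝ :=
  ⨍ x in S₁, ⨍ y in S₂,
    |f (x, y) - (⨍ y' in S₂, f (x, y')) - (⨍ x' in S₁, f (x', y)) + ⨍ z in S₁ ×ˢ S₂, f z|

/-- The rectangular BMO norm of `f` with respect to the bases `𝒮x, 𝒮y` of shapes in `ℝ`. -/
def recBmoNorm (𝒮x 𝒮y : Set (Set ℝ)) (f : ℝ × ℝ → ℝ) : ℝ≥0∞ :=
  ⨆ S₁ ∈ 𝒮x, ⨆ S₂ ∈ 𝒮y, ENNReal.ofReal (recOsc f S₁ S₂)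

/-- The basis of finite open intervals in `ℝ`. -/
def intervalBasis : Set (Set ℝ) := {S | ∃ a b : ℝ, a < b ∧ S = Ioo a b}

open intervalIntegral Real

section SqrtIntegrals

variable {r x : ℝ}

lemma hasDerivAt_sqrt_sq_sub_sq (hx : x ∈ Ioo (-r) r) :
    HasDerivAt (fun x => √(r ^ 2 - x ^ 2)) (-x / √(r ^ 2 - x ^ 2)) x := by
  have hpos : 0 < r ^ 2 - x ^ 2 := by nlinarith [hx.1, hx.2]
  have hsq : HasDerivAt (fun x : ℝ => r ^ 2 - x ^ 2) (-(2 * x)) x := by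
    simpa using (hasDerivAt_pow 2 x).const_sub (r ^ 2)
  refine ((hasDerivAt_sqrt hpos.ne').comp x hsq).congr_deriv ?_
  field_simp

lemma hasDerivAt_arcsin_div (hx : x ∈ Ioo (-r) r) :
    HasDerivAt (fun x => arcsin (x / r)) (1 / √(r ^ 2 - x ^ 2)) x := by
  have hr : 0 < r := by linarith [hx.1, hx.2]
  have hpos : 0 < r ^ 2 - x ^ 2 := by nlinarith [hx.1, hx.2]
  have hlt : x / r < 1 := (div_lt_one hr).2 hx.2
  have hgt : -1 < x / r := by rw [lt_div_iff₀ hr]; linarith [hx.1]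
  have hsqrt : √(1 - (x / r) ^ 2) = √(r ^ 2 - x ^ 2) / r := by
    rw [show 1 - (x / r) ^ 2 = (r ^ 2 - x ^ 2) / r ^ 2 by field_simp,
      sqrt_div hpos.le, sqrt_sq hr.le]
  refine ((hasDerivAt_arcsin hgt.ne' hlt.ne).comp x
    ((hasDerivAt_id x).div_const r)).congr_deriv ?_
  rw [hsqrt]
  field_simp

/-- The antiderivative comes from substituting `x = r sin θ`. -/
lemma hasDerivAt_sqrt_sq_sub_sq_pow_three_antideriv (hx : x ∈ Ioo (-r) r) :
    HasDerivAt (fun x => x * √(r ^ 2 - x ^ 2) ^ 3 / 4 + 3 * r ^ 2 / 8 * (x * √(r ^ 2 - x ^ 2))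
      + 3 * r ^ 4 / 8 * arcsin (x / r)) (√(r ^ 2 - x ^ 2) ^ 3) x := by
  have hpos : 0 < r ^ 2 - x ^ 2 := by nlinarith [hx.1, hx.2]
  refine ((((hasDerivAt_id x).mul ((hasDerivAt_sqrt_sq_sub_sq hx).pow 3)).div_const 4).add
    (((hasDerivAt_id x).mul (hasDerivAt_sqrt_sq_sub_sq hx)).const_mul (3 * r ^ 2 / 8)) |>.add
    ((hasDerivAt_arcsin_div hx).const_mul (3 * r ^ 4 / 8))).congr_deriv ?_
  have hs2 : √(r ^ 2 - x ^ 2) ^ 2 = r ^ 2 - x ^ 2 := sq_sqrt hpos.le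
  have hs0 : √(r ^ 2 - x ^ 2) ≠ 0 := (sqrt_pos.2 hpos).ne'
  simp only [id, Pi.pow_apply]
  generalize √(r ^ 2 - x ^ 2) = s at hs2 hs0 ⊢
  rw [show r ^ 4 = (s ^ 2 + x ^ 2) ^ 2 by rw [hs2]; ring,
    show r ^ 2 = s ^ 2 + x ^ 2 by rw [hs2]; ring]
  field_simp
  ring

lemma integral_sqrt_sq_sub_sq_pow_three (hr : 0 < r) :
    ∫ x in (0 : ℝ)..r, √(r ^ 2 - x ^ 2) ^ 3 = 3 * π * r ^ 4 / 16 := by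
  have hcont : Continuous fun x : ℝ => √(r ^ 2 - x ^ 2) := by fun_prop
  have harcsin : Continuous fun x => arcsin (x / r) := continuous_arcsin.comp (by fun_prop)
  rw [integral_eq_sub_of_hasDeriv_right_of_le hr.le (Continuous.continuousOn (by fun_prop))
    (fun x hx => (hasDerivAt_sqrt_sq_sub_sq_pow_three_antideriv
      ⟨by linarith [hx.1], hx.2⟩).hasDerivWithinAt)
    ((hcont.pow 3).intervalIntegrable 0 r)]
  simp only [sub_self, sqrt_zero, div_self hr.ne', zero_div, arcsin_one, arcsin_zero]
  ring

end SqrtIntegrals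

section PositivePart

variable {f : ℝ → ℝ} {l a b : ℝ}

lemma integral_eq_integral_of_eqOn_zero (hf : Continuous f) (hab : a ≤ b)
    (hzero : EqOn f 0 (Icc a b)) : ∫ x in l..b, f x = ∫ x in l..a, f x := by
  rw [← integral_add_adjacent_intervals (hf.intervalIntegrable l a) (hf.intervalIntegrable a b),
    integral_congr (a := a) (g := fun _ => 0) (by rwa [uIcc_of_le hab]),
    intervalIntegral.integral_zero, add_zero]

lemma integral_abs_eq_two_mul_integral_max_zero (hf : Continuous f)
    (h : ∫ x in a..b, f x = 0) : ∫ x in a..b, |f x| = 2 * ∫ x in a..b, max (f x) 0 := by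
  have habs : ∀ t : ℝ, |t| = 2 * max t 0 - t := fun t => by
    rcases le_total t 0 with ht | ht
    · rw [abs_of_nonpos ht, max_eq_right ht]; ring
    · rw [abs_of_nonneg ht, max_eq_left ht]; ring
  simp_rw [habs]
  rw [intervalIntegral.integral_sub
    ((by fun_prop : Continuous fun x => 2 * max (f x) 0).intervalIntegrable _ _)
    (hf.intervalIntegrable _ _), h, sub_zero, intervalIntegral.integral_const_mul]

variable {A c r L : ℝ}

lemma integral_max_sub_sq_zero (hc : 0 ≤ c) (hA : A ≤ c ^ 2) :
    ∫ y in (0 : ℝ)..c, max (A - y ^ 2) 0 = 2 / 3 * √(max A 0) ^ 3 := by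
  rcases le_or_gt A 0 with hA0 | hA0
  · rw [integral_congr (g := fun _ => 0), intervalIntegral.integral_zero, max_eq_right hA0,
      sqrt_zero]
    · norm_num
    · intro y _
      exact max_eq_right (by nlinarith)
  · have ha : √A ^ 2 = A := sq_sqrt hA0.le
    have hac : √A ≤ c := (sqrt_le_left hc).2 hA
    rw [integral_eq_integral_of_eqOn_zero (f := fun y => max (A - y ^ 2) 0) (by fun_prop) hac
      (fun y hy => max_eq_right (by nlinarith [hy.1, sqrt_nonneg A])),
      integral_congr (g := fun y => A - y ^ 2), intervalIntegral.integral_sub, integral_pow,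
      intervalIntegral.integral_const, max_eq_left hA0.le]
    · simp only [smul_eq_mul]
      nlinarith
    · exact intervalIntegrable_const
    · exact (continuous_pow 2).intervalIntegrable _ _
    · intro y hy
      rw [uIcc_of_le (sqrt_nonneg A)] at hy
      exact max_eq_left (by nlinarith [hy.1, hy.2])

lemma integral_sqrt_max_sq_sub_sq_pow_three (hr : 0 < r) (hrL : r ≤ L) :
    ∫ x in (0 : ℝ)..L, √(max (r ^ 2 - x ^ 2) 0) ^ 3 = 3 * π * r ^ 4 / 16 := by
  rw [integral_eq_integral_of_eqOn_zero (f := fun x => √(max (r ^ 2 - x ^ 2) 0) ^ 3)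
      (by fun_prop) hrL (fun x hx => by
        simp [max_eq_right (show r ^ 2 - x ^ 2 ≤ 0 by nlinarith [hx.1])]),
    ← integral_sqrt_sq_sub_sq_pow_three hr]
  refine integral_congr fun x hx => ?_
  rw [uIcc_of_le hr.le] at hx
  simp only [max_eq_left (show 0 ≤ r ^ 2 - x ^ 2 by nlinarith [hx.1, hx.2])]

end PositivePart

/-- `h(x,y) - (h_x)_I - (h_y)_I + h_{I×I}` for `h(x,y) = |x - y|` and `I = (0, L)`. -/
def doubleCenteredAbsSub (L x y : ℝ) : ℝ := |x - y| - (x ^ 2 + y ^ 2) / L + x + y - 2 * L / 3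

section DoubleCentered

variable {L x y : ℝ}

lemma integral_abs_sub (hx : x ∈ Icc 0 L) :
    ∫ y in (0 : ℝ)..L, |x - y| = (x ^ 2 + (L - x) ^ 2) / 2 := by
  have hint : ∀ a b : ℝ, IntervalIntegrable (fun y => |x - y|) volume a b :=
    fun a b => Continuous.intervalIntegrable (by fun_prop) a b
  rw [← integral_add_adjacent_intervals (hint 0 x) (hint x L),
    integral_congr (g := fun y => x - y), integral_congr (a := x) (g := fun y => y - x),
    intervalIntegral.integral_sub, intervalIntegral.integral_sub]
  · simp only [intervalIntegral.integral_const, integral_id, smul_eq_mul]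
    ring
  all_goals try exact Continuous.intervalIntegrable (by fun_prop) _ _
  · intro y hy
    rw [uIcc_of_le hx.2] at hy
    simp only [abs_of_nonpos (sub_nonpos.2 hy.1), neg_sub]
  · intro y hy
    rw [uIcc_of_le hx.1] at hy
    simp only [abs_of_nonneg (sub_nonneg.2 hy.2)]

lemma integral_doubleCenteredAbsSub (hL : 0 < L) (hx : x ∈ Icc 0 L) :
    ∫ y in (0 : ℝ)..L, doubleCenteredAbsSub L x y = 0 := by
  unfold doubleCenteredAbsSub
  rw [intervalIntegral.integral_sub, intervalIntegral.integral_add, intervalIntegral.integral_add,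
    intervalIntegral.integral_sub, integral_abs_sub hx]
  · simp only [intervalIntegral.integral_div, intervalIntegral.integral_add,
      intervalIntegrable_const, intervalIntegrable_pow, intervalIntegral.integral_const,
      integral_id, integral_pow, smul_eq_mul]
    field_simp
    ring
  all_goals exact Continuous.intervalIntegrable (by fun_prop) _ _

lemma doubleCenteredAbsSub_of_le (hL : 0 < L) (hyx : y ≤ x) :
    doubleCenteredAbsSub L x y = (L ^ 2 / 3 - (L - x) ^ 2 - y ^ 2) / L := by
  rw [doubleCenteredAbsSub, abs_of_nonneg (sub_nonneg.2 hyx)]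
  field_simp
  ring

lemma doubleCenteredAbsSub_of_ge (hL : 0 < L) (hxy : x ≤ y) :
    doubleCenteredAbsSub L x y = (L ^ 2 / 3 - x ^ 2 - (L - y) ^ 2) / L := by
  rw [doubleCenteredAbsSub, abs_of_nonpos (sub_nonpos.2 hxy)]
  field_simp
  ring

lemma max_doubleCenteredAbsSub_zero_of_le (hL : 0 < L) (hyx : y ≤ x) :
    max (doubleCenteredAbsSub L x y) 0 = max (L ^ 2 / 3 - (L - x) ^ 2 - y ^ 2) 0 / L := by
  rw [doubleCenteredAbsSub_of_le hL hyx, ← max_div_div_right hL.le, zero_div]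

lemma max_doubleCenteredAbsSub_zero_of_ge (hL : 0 < L) (hxy : x ≤ y) :
    max (doubleCenteredAbsSub L x y) 0 = max (L ^ 2 / 3 - x ^ 2 - (L - y) ^ 2) 0 / L := by
  rw [doubleCenteredAbsSub_of_ge hL hxy, ← max_div_div_right hL.le, zero_div]

lemma integral_max_doubleCenteredAbsSub_zero (hL : 0 < L) (hx : x ∈ Icc 0 L) :
    ∫ y in (0 : ℝ)..L, max (doubleCenteredAbsSub L x y) 0 =
      2 / (3 * L) *
        (√(max (L ^ 2 / 3 - (L - x) ^ 2) 0) ^ 3 + √(max (L ^ 2 / 3 - x ^ 2) 0) ^ 3) := by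
  have hint : ∀ a b : ℝ,
      IntervalIntegrable (fun y => max (doubleCenteredAbsSub L x y) 0) volume a b :=
    fun a b => Continuous.intervalIntegrable (by unfold doubleCenteredAbsSub; fun_prop) a b
  have hleft : ∫ y in (0 : ℝ)..x, max (doubleCenteredAbsSub L x y) 0 =
      (∫ y in (0 : ℝ)..x, max (L ^ 2 / 3 - (L - x) ^ 2 - y ^ 2) 0) / L := by
    rw [← intervalIntegral.integral_div]
    refine integral_congr fun y hy => ?_
    rw [uIcc_of_le hx.1] at hy
    exact max_doubleCenteredAbsSub_zero_of_le hL hy.2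
  have hright : ∫ y in x..L, max (doubleCenteredAbsSub L x y) 0 =
      (∫ y in (0 : ℝ)..L - x, max (L ^ 2 / 3 - x ^ 2 - y ^ 2) 0) / L := by
    have hreflect := integral_comp_sub_left (a := x) (b := L)
      (fun y => max (L ^ 2 / 3 - x ^ 2 - y ^ 2) 0 / L) L
    rw [sub_self] at hreflect
    rw [← intervalIntegral.integral_div, ← hreflect]
    refine integral_congr fun y hy => ?_
    rw [uIcc_of_le hx.2] at hy
    exact max_doubleCenteredAbsSub_zero_of_ge hL hy.1
  rw [← integral_add_adjacent_intervals (hint 0 x) (hint x L), hleft, hright,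
    integral_max_sub_sq_zero hx.1 (by nlinarith), integral_max_sub_sq_zero (by linarith [hx.2])
    (by nlinarith)]
  field_simp

lemma integral_abs_doubleCenteredAbsSub (hL : 0 < L) (hx : x ∈ Icc 0 L) :
    ∫ y in (0 : ℝ)..L, |doubleCenteredAbsSub L x y| =
      4 / (3 * L) *
        (√(max (L ^ 2 / 3 - (L - x) ^ 2) 0) ^ 3 + √(max (L ^ 2 / 3 - x ^ 2) 0) ^ 3) := by
  rw [integral_abs_eq_two_mul_integral_max_zero (by unfold doubleCenteredAbsSub; fun_prop)
    (integral_doubleCenteredAbsSub hL hx), integral_max_doubleCenteredAbsSub_zero hL hx]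
  ring

lemma integral_integral_abs_doubleCenteredAbsSub (hL : 0 < L) :
    ∫ x in (0 : ℝ)..L, ∫ y in (0 : ℝ)..L, |doubleCenteredAbsSub L x y| = π * L ^ 3 / 18 := by
  set φ : ℝ → ℝ := fun x => √(max (L ^ 2 / 3 - x ^ 2) 0) ^ 3 with hφ
  have hφc : Continuous φ := by fun_prop
  have hreflect : ∫ x in (0 : ℝ)..L, φ (L - x) = ∫ x in (0 : ℝ)..L, φ x := by
    simp [integral_comp_sub_left (a := 0) (b := L) φ L]
  have hr : (L / √3) ^ 2 = L ^ 2 / 3 := by rw [div_pow, sq_sqrt zero_le_three]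
  have hφ_int : ∫ x in (0 : ℝ)..L, φ x = π * L ^ 4 / 48 := by
    rw [hφ, ← hr, integral_sqrt_max_sq_sub_sq_pow_three (by positivity)
      (div_le_self hL.le (one_le_sqrt.2 (by norm_num))), div_pow,
      show √3 ^ 4 = (√3 ^ 2) ^ 2 by ring, sq_sqrt zero_le_three]
    ring
  rw [integral_congr (g := fun x => 4 / (3 * L) * (φ (L - x) + φ x)) fun x hx =>
      integral_abs_doubleCenteredAbsSub hL (by rwa [uIcc_of_le hL.le] at hx),
    intervalIntegral.integral_const_mul, intervalIntegral.integral_add (f := fun x => φ (L - x))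
      ((hφc.comp (continuous_sub_left L)).intervalIntegrable _ _) (hφc.intervalIntegrable _ _),
    hreflect, hφ_int]
  field_simp
  ring

end DoubleCentered

section Averages

lemma setAverage_prod {α β E : Type*} [MeasurableSpace α] [MeasurableSpace β]
    [NormedAddCommGroup E] [NormedSpace ℝ E] {μ : Measure α} {ν : Measure β} [SFinite μ]
    [SFinite ν] {s : Set α} {t : Set β} {f : α × β → E}
    (hf : IntegrableOn f (s ×ˢ t) (μ.prod ν)) :
    ⨍ z in s ×ˢ t, f z ∂μ.prod ν = ⨍ x in s, ⨍ y in t, f (x, y) ∂ν ∂μ := by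
  simp only [setAverage_eq, measureReal_prod_prod, setIntegral_prod f hf,
    MeasureTheory.integral_smul, smul_smul, mul_inv_rev, mul_comm]

lemma setAverage_Ioo {a b : ℝ} (hab : a < b) (f : ℝ → ℝ) :
    ⨍ x in Ioo a b, f x = (∫ x in a..b, f x) / (b - a) := by
  rw [setAverage_eq, volume_real_Ioo_of_le hab.le, integral_of_le hab.le,
    integral_Ioc_eq_integral_Ioo, smul_eq_mul, inv_mul_eq_div]

variable {L x : ℝ}

lemma setAverage_Ioo_abs_sub (hL : 0 < L) (hx : x ∈ Icc 0 L) :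
    ⨍ y in Ioo 0 L, |x - y| = x ^ 2 / L - x + L / 2 := by
  rw [setAverage_Ioo hL, integral_abs_sub hx]
  field_simp [hL.ne']
  ring

lemma setAverage_Ioo_prod_abs_sub (hL : 0 < L) :
    ⨍ z in Ioo 0 L ×ˢ Ioo 0 L, |z.1 - z.2| = L / 3 := by
  have hint : IntegrableOn (fun z : ℝ × ℝ => |z.1 - z.2|) (Ioo 0 L ×ˢ Ioo 0 L) :=
    ((continuous_fst.sub continuous_snd).abs.continuousOn.integrableOn_compact
      (isCompact_Icc.prod isCompact_Icc)).mono_set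
      (prod_mono Ioo_subset_Icc_self Ioo_subset_Icc_self)
  rw [Measure.volume_eq_prod, setAverage_prod hint,
    setAverage_congr_fun measurableSet_Ioo (g := fun x => x ^ 2 / L - x + L / 2)
      (ae_of_all _ fun x hx => setAverage_Ioo_abs_sub hL (Ioo_subset_Icc_self hx)),
    setAverage_Ioo hL, intervalIntegral.integral_add, intervalIntegral.integral_sub]
  · simp only [intervalIntegral.integral_div, intervalIntegral.integral_const, integral_id,
      integral_pow, smul_eq_mul]
    field_simp [hL.ne']
    ring
  all_goals exact Continuous.intervalIntegrable (by fun_prop) _ _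

end Averages

lemma recOsc_abs_sub_Ioo {L : ℝ} (hL : 0 < L) :
    recOsc (fun z => |z.1 - z.2|) (Ioo 0 L) (Ioo 0 L) = π * L / 18 := by
  have hslice : ∀ x ∈ Ioo 0 L,
      ⨍ y in Ioo 0 L, |(|x - y| - (⨍ y' in Ioo 0 L, |x - y'|) - (⨍ x' in Ioo 0 L, |x' - y|)
        + ⨍ z in Ioo 0 L ×ˢ Ioo 0 L, |z.1 - z.2|)| =
      ⨍ y in Ioo 0 L, |doubleCenteredAbsSub L x y| := fun x hx =>
    setAverage_congr_fun measurableSet_Ioo (ae_of_all _ fun y hy => by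
      simp_rw [abs_sub_comm _ y]
      rw [setAverage_Ioo_abs_sub hL (Ioo_subset_Icc_self hx),
        setAverage_Ioo_abs_sub hL (Ioo_subset_Icc_self hy), setAverage_Ioo_prod_abs_sub hL,
        doubleCenteredAbsSub, abs_sub_comm y x]
      congr 1
      field_simp
      ring)
  rw [recOsc, setAverage_congr_fun measurableSet_Ioo (ae_of_all _ hslice)]
  simp_rw [setAverage_Ioo hL, sub_zero]
  rw [intervalIntegral.integral_div, integral_integral_abs_doubleCenteredAbsSub hL]
  field_simp

lemma ofReal_recOsc_le_recBmoNorm {𝒮x 𝒮y : Set (Set ℝ)} {S₁ S₂ : Set ℝ} (f : ℝ × ℝ → ℝ)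
    (h₁ : S₁ ∈ 𝒮x) (h₂ : S₂ ∈ 𝒮y) : ENNReal.ofReal (recOsc f S₁ S₂) ≤ recBmoNorm 𝒮x 𝒮y f :=
  le_iSup₂_of_le S₁ h₁
    (le_iSup₂_of_le (f := fun S₂ _ => ENNReal.ofReal (recOsc f S₁ S₂)) S₂ h₂ le_rfl)

lemma recBmoNorm_eq_top_of_forall_exists_le {𝒮x 𝒮y : Set (Set ℝ)} {f : ℝ × ℝ → ℝ}
    (h : ∀ C : ℝ, ∃ S₁ ∈ 𝒮x, ∃ S₂ ∈ 𝒮y, C ≤ recOsc f S₁ S₂) : recBmoNorm 𝒮x 𝒮y f = ⊤ := by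
  refine ENNReal.eq_top_of_forall_nnreal_le fun C => ?_
  obtain ⟨S₁, h₁, S₂, h₂, hC⟩ := h C
  calc (C : ℝ≥0∞) = ENNReal.ofReal C := (ENNReal.ofReal_coe_nnreal).symm
    _ ≤ ENNReal.ofReal (recOsc f S₁ S₂) := ENNReal.ofReal_le_ofReal hC
    _ ≤ recBmoNorm 𝒮x 𝒮y f := ofReal_recOsc_le_recBmoNorm f h₁ h₂

/-- For `h(x,y) = |x − y|` and `I_L = (0,L)`, the rectangular mean
oscillation of `h` over `I_L × I_L` equals `πL/18`; consequently, since it tends to `∞` as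
`L → ∞`, `h ∉ BMO_{rec,ℛ}(ℝ×ℝ)` where `ℛ` is the basis of axis-parallel rectangles. -/
theorem abs_x_sub_y_not_rec_bmo :
    (∀ L : ℝ, 0 < L →
      recOsc (fun z => |z.1 - z.2|) (Ioo 0 L) (Ioo 0 L) = Real.pi * L / 18) ∧
    recBmoNorm intervalBasis intervalBasis (fun z => |z.1 - z.2|) = ⊤ := by
  refine ⟨fun L hL => recOsc_abs_sub_Ioo hL, recBmoNorm_eq_top_of_forall_exists_le fun C => ?_⟩
  have hL : 0 < 18 * |C| / π + 1 := by positivity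
  refine ⟨_, ⟨0, _, hL, rfl⟩, _, ⟨0, _, hL, rfl⟩, ?_⟩
  rw [recOsc_abs_sub_Ioo hL, mul_add, mul_div_cancel₀ _ pi_ne_zero]
  linarith [le_abs_self C, pi_pos]
end
end

section
/- Let f(x,y) = −log|x − y| on ℝ², regarded as a function on ℝ×ℝ, and let ℛ be the basis of open axis-parallel rectangles in ℝ². Then ‖f‖_{BLO_{rec,ℛ}} ≥ 2 log 2 − 1; in fact, for the rectangle (0,1)×(1,2) one has ⨍_{(0,1)}⨍_{(1,2)} [f(x,y) − max(essinf_{y∈(1,2)} f(x,y), essinf_{x∈(0,1)} f(x,y))] dy dx ≥ 2 log 2 − 1. -/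
open MeasureTheory Set ENNReal

noncomputable section

/-- The rectangular lower oscillation of `f : ℝ × ℝ → ℝ` over `I × J`:
`⨍_I ⨍_J [f(x,y) − max (essinf_J f_x, essinf_I f_y)]`. -/
def recBloOsc (f : ℝ × ℝ → ℝ) (I J : Set ℝ) : ℝ :=
  ⨍ x in I, ⨍ y in J,
    (f (x, y) - max (essInf (fun y' => f (x, y')) (volume.restrict J))
      (essInf (fun x' => f (x', y)) (volume.restrict I)))

/-- The rectangular BLO norm of `f` with respect to the basis `ℛ` of rectangles `I × J`. -/
def recBloNorm (f : ℝ × ℝ → ℝ) : ℝ≥0∞ :=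
  ⨆ I ∈ intervalBasis, ⨆ J ∈ intervalBasis, ENNReal.ofReal (recBloOsc f I J)

/-! On `(0,1) × (1,2)` the function is `-log (y - x)`, decreasing in `y` and increasing in `x`,
so its essential infima along the sides are the boundary values `-log (2 - x)` and `-log y`.
The oscillation over this rectangle is then an elementary double integral: the inner integral is
`(1 - x) log (1 - x) + x + x log (2 - x)`, and integrating it over `(0,1)` with the primitives of
`log t` and `t log t` gives exactly `2 log 2 - 1`. -/

open Filter Topology intervalIntegral

theorem essInf_restrict_eq_of_tendsto {α β : Type*} [TopologicalSpace α] [MeasurableSpace α]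
    [OpensMeasurableSpace α] {μ : Measure α} [μ.IsOpenPosMeasure]
    [ConditionallyCompleteLinearOrder β] [TopologicalSpace β] [OrderTopology β]
    {s : Set α} {g : α → β} {c : α} {m : β} (hs : IsOpen s) (hc : c ∈ closure s)
    (hm : ∀ y ∈ s, m ≤ g y) (hg : Tendsto g (𝓝[s] c) (𝓝 m)) :
    essInf g (μ.restrict s) = m := by
  -- Levels `a > m` are not null: near `c` the set `{g < a}` contains a nonempty open part of `s`.
  rw [essInf_eq_sSup, ← csSup_Iic (a := m)]
  congr 1
  ext a
  rw [mem_ofPred_eq, mem_Iic, Measure.restrict_apply' hs.measurableSet]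
  constructor
  · intro ha
    by_contra! hma
    obtain ⟨u, hu, hcu, hus⟩ := mem_nhdsWithin.1 (hg (Iio_mem_nhds hma))
    have hpos : 0 < μ (u ∩ s) := (hu.inter hs).measure_pos μ (mem_closure_iff.1 hc u hu hcu)
    exact hpos.ne' (measure_mono_null (subset_inter hus inter_subset_right) ha)
  · intro ham
    refine measure_mono_null (fun y hy => ?_) measure_empty
    exact ((hm y hy.2).trans_lt (lt_of_lt_of_le hy.1 ham)).false

theorem essInf_neg_log_abs_sub_right {x a b : ℝ} (hxa : x ≤ a) (hab : a < b) :
    essInf (fun y => -Real.log |x - y|) (volume.restrict (Ioo a b)) = -Real.log (b - x) := by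
  have hdist : ∀ y, x ≤ y → |x - y| = y - x := fun y hy => by
    rw [abs_sub_comm, abs_of_nonneg (sub_nonneg.2 hy)]
  refine essInf_restrict_eq_of_tendsto (c := b) isOpen_Ioo
    (by simp [closure_Ioo hab.ne, hab.le]) (fun y hy => ?_) ?_
  · rw [hdist y (by linarith [hy.1])]
    exact neg_le_neg (Real.log_le_log (by linarith [hy.1]) (by linarith [hy.2]))
  · have hcont : ContinuousAt (fun y => -Real.log |x - y|) b := by
      refine ((continuous_const.sub continuous_id).abs.continuousAt.log ?_).neg
      simp [sub_eq_zero]; linarith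
    simpa [hdist b (by linarith)] using hcont.tendsto.mono_left nhdsWithin_le_nhds

theorem essInf_neg_log_abs_sub_left {y a b : ℝ} (hab : a < b) (hby : b ≤ y) :
    essInf (fun x => -Real.log |x - y|) (volume.restrict (Ioo a b)) = -Real.log (y - a) := by
  have hdist : ∀ x, x ≤ y → |x - y| = y - x := fun x hx => by
    rw [abs_sub_comm, abs_of_nonneg (sub_nonneg.2 hx)]
  refine essInf_restrict_eq_of_tendsto (c := a) isOpen_Ioo
    (by simp [closure_Ioo hab.ne, hab.le]) (fun x hx => ?_) ?_
  · rw [hdist x (by linarith [hx.2])]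
    exact neg_le_neg (Real.log_le_log (by linarith [hx.2]) (by linarith [hx.1]))
  · have hcont : ContinuousAt (fun x => -Real.log |x - y|) a := by
      refine ((continuous_id.sub continuous_const).abs.continuousAt.log ?_).neg
      simp [sub_eq_zero]; linarith
    simpa [hdist a (by linarith)] using hcont.tendsto.mono_left nhdsWithin_le_nhds

theorem integral_mul_log (a b : ℝ) :
    ∫ x in a..b, x * Real.log x =
      b ^ 2 / 2 * Real.log b - b ^ 2 / 4 - (a ^ 2 / 2 * Real.log a - a ^ 2 / 4) := by
  -- The primitive is continuous at `0` as well, so only the point `0` is excluded from FTC.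
  have hcont : Continuous fun x : ℝ => x ^ 2 / 2 * Real.log x - x ^ 2 / 4 :=
    (((continuous_id.div_const 2).mul Real.continuous_mul_log).sub
      ((continuous_pow 2).div_const 4)).congr fun x => by dsimp; ring
  refine integral_eq_of_hasDerivAt_off_countable _ _ (countable_singleton 0) hcont.continuousOn
    (fun x hx => ?_) (Real.continuous_mul_log.intervalIntegrable _ _)
  have hx0 : x ≠ 0 := hx.2
  refine ((((hasDerivAt_pow 2 x).div_const 2).mul (Real.hasDerivAt_log hx0)).sub
    ((hasDerivAt_pow 2 x).div_const 4)).congr_deriv ?_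
  field_simp
  ring

theorem intervalIntegrable_log_sub_const (c a b : ℝ) :
    IntervalIntegrable (fun y => Real.log (y - c)) volume a b := by
  simpa using intervalIntegrable_log'.comp_sub_right (a := a - c) (b := b - c) c

theorem intervalIntegrable_log_const_sub (c a b : ℝ) :
    IntervalIntegrable (fun y => Real.log (c - y)) volume a b := by
  simpa using intervalIntegrable_log'.comp_sub_left (a := c - a) (b := c - b) c

theorem IntervalIntegrable.max {f g : ℝ → ℝ} {a b : ℝ}
    (hf : IntervalIntegrable f volume a b)
    (hg : IntervalIntegrable g volume a b) :
    IntervalIntegrable (fun y => max (f y) (g y)) volume a b :=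
  ⟨hf.1.sup hg.1, hf.2.sup hg.2⟩

theorem integral_neg_log_sub_sub_max {x : ℝ} (hx0 : 0 ≤ x) (hx1 : x ≤ 1) :
    ∫ y in (1 : ℝ)..2, (-Real.log (y - x) - max (-Real.log (2 - x)) (-Real.log y)) =
      (1 - x) * Real.log (1 - x) + x + x * Real.log (2 - x) := by
  have hmax : ∀ a b : ℝ,
      IntervalIntegrable (fun y => max (-Real.log (2 - x)) (-Real.log y)) volume a b :=
    fun _ _ => intervalIntegrable_const.max intervalIntegrable_log'.neg
  have hfirst : ∫ y in (1 : ℝ)..2, -Real.log (y - x) =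
      -((2 - x) * Real.log (2 - x) - (1 - x) * Real.log (1 - x) - 1) := by
    rw [intervalIntegral.integral_neg, integral_comp_sub_right (fun t => Real.log t), integral_log]
    ring
  have hlow : ∫ y in (1 : ℝ)..(2 - x), max (-Real.log (2 - x)) (-Real.log y) =
      -((2 - x) * Real.log (2 - x) - (2 - x) + 1) := by
    rw [integral_congr (g := fun y => -Real.log y), intervalIntegral.integral_neg, integral_log,
      Real.log_one]
    · ring
    intro y hy
    rw [uIcc_of_le (by linarith)] at hy
    exact max_eq_right (neg_le_neg (Real.log_le_log (by linarith [hy.1]) hy.2))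
  have hhigh :
      ∫ y in (2 - x)..2, max (-Real.log (2 - x)) (-Real.log y) = x * -Real.log (2 - x) := by
    rw [integral_congr (g := fun _ => -Real.log (2 - x)), intervalIntegral.integral_const,
      smul_eq_mul]
    · ring
    intro y hy
    rw [uIcc_of_le (by linarith)] at hy
    exact max_eq_left (neg_le_neg (Real.log_le_log (by linarith) hy.1))
  have hlog : IntervalIntegrable (fun y => -Real.log (y - x)) volume 1 2 :=
    (intervalIntegrable_log_sub_const x 1 2).neg
  rw [intervalIntegral.integral_sub hlog (hmax 1 2),
    ← integral_add_adjacent_intervals (hmax 1 (2 - x)) (hmax (2 - x) 2), hfirst, hlow, hhigh]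
  ring

theorem integral_mul_log_one_sub_add_mul_log_two_sub :
    ∫ x in (0 : ℝ)..1, ((1 - x) * Real.log (1 - x) + x + x * Real.log (2 - x)) =
      2 * Real.log 2 - 1 := by
  have hfirst : ∫ x in (0 : ℝ)..1, (1 - x) * Real.log (1 - x) = -1 / 4 := by
    rw [integral_comp_sub_left (fun t => t * Real.log t), integral_mul_log]
    norm_num
  have hlast : ∫ x in (0 : ℝ)..1, x * Real.log (2 - x) = 2 * Real.log 2 - 5 / 4 := by
    calc ∫ x in (0 : ℝ)..1, x * Real.log (2 - x)
        = ∫ x in (0 : ℝ)..1, (2 * Real.log (2 - x) - (2 - x) * Real.log (2 - x)) :=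
          integral_congr fun x _ => by ring
      _ = 2 * (∫ t in (1 : ℝ)..2, Real.log t) - ∫ t in (1 : ℝ)..2, t * Real.log t := by
          rw [integral_comp_sub_left (fun t => 2 * Real.log t - t * Real.log t),
            intervalIntegral.integral_sub (intervalIntegrable_log'.const_mul 2)
              (Real.continuous_mul_log.intervalIntegrable _ _),
            intervalIntegral.integral_const_mul]
          norm_num
      _ = 2 * Real.log 2 - 5 / 4 := by
          rw [integral_log, integral_mul_log]
          norm_num
          ring
  have hint₁ : IntervalIntegrable (fun x : ℝ => (1 - x) * Real.log (1 - x)) volume 0 1 :=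
    (Real.continuous_mul_log.comp (continuous_sub_left 1)).intervalIntegrable 0 1
  have hint₂ : IntervalIntegrable (fun x : ℝ => x * Real.log (2 - x)) volume 0 1 :=
    (intervalIntegrable_log_const_sub 2 0 1).continuousOn_mul continuousOn_id
  rw [intervalIntegral.integral_add (hint₁.add intervalIntegrable_id) hint₂,
    intervalIntegral.integral_add hint₁ intervalIntegrable_id, hfirst, hlast, integral_id]
  ring

theorem setAverage_Ioo_eq_mul_intervalIntegral {a b : ℝ} (hab : a ≤ b) (f : ℝ → ℝ) :
    ⨍ x in Ioo a b, f x = (b - a)⁻¹ * ∫ x in a..b, f x := by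
  rw [setAverage_eq, Real.volume_real_Ioo_of_le hab, integral_of_le hab,
    integral_Ioc_eq_integral_Ioo, smul_eq_mul]

theorem recBloOsc_neg_log_abs_sub :
    recBloOsc (fun p => -Real.log |p.1 - p.2|) (Ioo 0 1) (Ioo 1 2) = 2 * Real.log 2 - 1 := by
  have hinner : ∀ x ∈ uIcc (0 : ℝ) 1,
      ⨍ y in Ioo (1 : ℝ) 2, (-Real.log |x - y| -
        max (essInf (fun y' => -Real.log |x - y'|) (volume.restrict (Ioo 1 2)))
          (essInf (fun x' => -Real.log |x' - y|) (volume.restrict (Ioo 0 1)))) =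
        (1 - x) * Real.log (1 - x) + x + x * Real.log (2 - x) := by
    intro x hx
    rw [uIcc_of_le zero_le_one] at hx
    rw [setAverage_Ioo_eq_mul_intervalIntegral one_le_two,
      essInf_neg_log_abs_sub_right hx.2 one_lt_two, ← integral_neg_log_sub_sub_max hx.1 hx.2,
      show ((2 : ℝ) - 1)⁻¹ = 1 by norm_num, one_mul]
    refine integral_congr fun y hy => ?_
    rw [uIcc_of_le one_le_two] at hy
    simp only [essInf_neg_log_abs_sub_left zero_lt_one hy.1, sub_zero,
      abs_sub_comm x y, abs_of_nonneg (by linarith [hy.1, hx.2] : 0 ≤ y - x)]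
  rw [recBloOsc, setAverage_Ioo_eq_mul_intervalIntegral zero_le_one, integral_congr hinner,
    integral_mul_log_one_sub_add_mul_log_two_sub]
  norm_num

theorem ofReal_recBloOsc_le_recBloNorm (f : ℝ × ℝ → ℝ) {I J : Set ℝ}
    (hI : I ∈ intervalBasis) (hJ : J ∈ intervalBasis) :
    ENNReal.ofReal (recBloOsc f I J) ≤ recBloNorm f :=
  le_iSup₂_of_le I hI (le_iSup₂_of_le J hJ le_rfl)

/-- For `f(x,y) = −log|x − y|` on `ℝ×ℝ` and the basis `ℛ` of axis-parallel
rectangles, `‖f‖_{BLO_{rec,ℛ}} ≥ 2 log 2 − 1`; in fact the defining average over the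
rectangle `(0,1)×(1,2)` is at least `2 log 2 − 1`. -/
theorem neg_log_abs_rec_blo_lower_bound :
    2 * Real.log 2 - 1 ≤
      recBloOsc (fun p => - Real.log |p.1 - p.2|) (Ioo 0 1) (Ioo 1 2) ∧
    ENNReal.ofReal (2 * Real.log 2 - 1) ≤
      recBloNorm (fun p => - Real.log |p.1 - p.2|) := by
  refine ⟨recBloOsc_neg_log_abs_sub.ge, ?_⟩
  rw [← recBloOsc_neg_log_abs_sub]
  exact ofReal_recBloOsc_le_recBloNorm _ ⟨0, 1, zero_lt_one, rfl⟩ ⟨1, 2, one_lt_two, rfl⟩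
end
end
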